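/- In any commutative ring, if x_1, x_2, x_3, … is a sequence of elements and we define a_n = P_n(x_1,…,x_n) via the generalized Chebyshev recurrence, then for all n ≥ 2 the Desnanot–Jacobi (Dodgson) identity holds for the associated tridiagonal determinants: P_n(x_1,…,x_n)·P_{n−2}(x_2,…,x_{n−1}) = P_{n−1}(x_1,…,x_{n−1})·P_{n−1}(x_2,…,x_n) − 1. -/
import Mathlib


/-- Generalized Chebyshev polynomial on the window `x 0, …, x (n-1)`:
`P x n = P_n(x_1, …, x_n)` where `x_i = x (i-1)`. -/
def P {R : Type*} [CommRing R] (x : ℕ → R) : ℕ → R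
  | 0 => 1
  | 1 => x 0
  | (n + 2) => x (n + 1) * P x (n + 1) - P x n

/-- Desnanot–Jacobi (Dodgson) identity for generalized Chebyshev polynomials:
`P_n(x_1,…,x_n)·P_{n−2}(x_2,…,x_{n−1}) = P_{n−1}(x_1,…,x_{n−1})·P_{n−1}(x_2,…,x_n) − 1`. -/
theorem generalized_chebyshev_dodgson {R : Type*} [CommRing R]
    (x : ℕ → R) (n : ℕ) (hn : 2 ≤ n) :
    P x n * P (fun k => x (k + 1)) (n - 2) =
      P x (n - 1) * P (fun k => x (k + 1)) (n - 1) - 1 := by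
  obtain ⟨m, rfl⟩ : ∃ m, n = m + 2 := ⟨n - 2, by omega⟩
  simp only [Nat.add_sub_cancel, show m + 2 - 1 = m + 1 from rfl]
  induction m with
  | zero => simp [P]; ring
  | succ k ih =>
      show P x (k + 3) * P (fun k => x (k + 1)) (k + 1) = _
      rw [show P x (k + 3) = x (k + 2) * P x (k + 2) - P x (k + 1) from rfl,
        show P (fun k => x (k + 1)) (k + 2)
          = x (k + 2) * P (fun k => x (k + 1)) (k + 1) - P (fun k => x (k + 1)) k from rfl]
      linear_combination ih (by omega)
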